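/- arXiv:2504.16678 — 4 statements merged into one kernel-verified Lean document; each statement's English description precedes it below -/
import Mathlib

section
/- Let K and L be convex bodies (nonempty compact convex sets) in R^n that cannot be separated by a hyperplane. If (K_i) and (L_i) are sequences of convex bodies with K_i → K and L_i → L in the Hausdorff metric, then K_i ∩ L_i is nonempty for all sufficiently large i, and K_i ∩ L_i → K ∩ L in the Hausdorff metric. -/
/-!
Non-separability of `K` and `L` means that `0` is an interior point of `K - L`, say
`closedBall 0 ρ ⊆ K - L`. Given `x ∈ K` and `y ∈ L`, write `ρ (y - x) / ‖y - x‖ = a - b`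
with `a ∈ K`, `b ∈ L`: the segments `[x, a]` and `[y, b]` meet, which gives a point of `K ∩ L`
within `diam K / ρ * ‖x - y‖` of `x`. Hence the Hausdorff distance between the intersections is
linear in the distances between the bodies, provided the ball condition also holds for the
perturbed bodies. It does, with radius `ρ / 2`, because a ball contained in the
`δ`-thickening of a closed convex set shrinks by `δ` into the set (separate a missing point
by a unit normal and push it by `δ` along it).
-/

open Metric Filter Set RealInnerProductSpace
open scoped Pointwise

theorem sub_subset_thickening_sub {E : Type*} [SeminormedAddCommGroup E] {A B A' B' : Set E}
    {ε δ : ℝ} (hA : A ⊆ thickening ε A') (hB : B ⊆ thickening δ B') :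
    A - B ⊆ thickening (ε + δ) (A' - B') := by
  rintro _ ⟨a, ha, b, hb, rfl⟩
  obtain ⟨a', ha', haa'⟩ := mem_thickening_iff.1 (hA ha)
  obtain ⟨b', hb', hbb'⟩ := mem_thickening_iff.1 (hB hb)
  exact mem_thickening_iff.2
    ⟨a' - b', sub_mem_sub ha' hb', (dist_sub_sub_le a b a' b').trans_lt (add_lt_add haa' hbb')⟩

section NormedSpace

variable {E : Type*} [NormedAddCommGroup E] [NormedSpace ℝ E]

theorem Convex.exists_linearMap_ne_zero_nonpos_of_zero_notMem_interior [FiniteDimensional ℝ E]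
    {C : Set E} (hC : Convex ℝ C) (hne : C.Nonempty) (h0 : (0 : E) ∉ interior C) :
    ∃ f : E →ₗ[ℝ] ℝ, f ≠ 0 ∧ ∀ a ∈ C, f a ≤ 0 := by
  rcases (interior C).eq_empty_or_nonempty with hint | hint
  · -- `C` spans a proper affine subspace, on which some nonzero functional is constant
    obtain ⟨c, hc⟩ := hne
    have hdir : (affineSpan ℝ C).direction < ⊤ := by
      rw [lt_top_iff_ne_top, Ne,
        AffineSubspace.direction_eq_top_iff_of_nonempty ⟨c, mem_affineSpan ℝ hc⟩,
        ← hC.interior_nonempty_iff_affineSpan_eq_top, hint]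
      exact not_nonempty_empty
    obtain ⟨f, hf0, hker⟩ := Submodule.exists_le_ker_of_lt_top _ hdir
    have hconst : ∀ a ∈ C, f a = f c := fun a ha => by
      have := hker <|
        AffineSubspace.vsub_mem_direction (mem_affineSpan ℝ ha) (mem_affineSpan ℝ hc)
      rwa [LinearMap.mem_ker, vsub_eq_sub, map_sub, sub_eq_zero] at this
    rcases le_total (f c) 0 with hfc | hfc
    · exact ⟨f, hf0, fun a ha => (hconst a ha).trans_le hfc⟩
    · exact ⟨-f, neg_ne_zero.2 hf0, fun a ha => by simp [hconst a ha, hfc]⟩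
  · obtain ⟨f, hf0, hf⟩ := geometric_hahn_banach_of_nonempty_interior_point hC h0 hint
    refine ⟨f.toLinearMap, fun h => hf0 (ContinuousLinearMap.coe_injective ?_), fun a ha => ?_⟩
    · simpa using h
    · simpa using hf a ha

theorem exists_closedBall_subset_sub_of_not_separated [FiniteDimensional ℝ E] {K L : Set E}
    (hK : Convex ℝ K) (hL : Convex ℝ L) (hKc : IsCompact K) (hKne : K.Nonempty)
    (hLne : L.Nonempty)
    (hsep : ¬ ∃ (f : E →ₗ[ℝ] ℝ) (α : ℝ), f ≠ 0 ∧
      (∀ x ∈ K, f x ≤ α) ∧ (∀ x ∈ L, α ≤ f x)) :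
    ∃ ρ, 0 < ρ ∧ closedBall (0 : E) ρ ⊆ K - L := by
  have h0 : (0 : E) ∈ interior (K - L) := by
    by_contra h0
    obtain ⟨f, hf0, hf⟩ :=
      (hK.sub hL).exists_linearMap_ne_zero_nonpos_of_zero_notMem_interior (hKne.sub hLne) h0
    obtain ⟨k, hk, hmax⟩ :=
      hKc.exists_isMaxOn hKne f.continuous_of_finiteDimensional.continuousOn
    refine hsep ⟨f, f k, hf0, fun x hx => hmax hx, fun y hy => ?_⟩
    simpa [sub_nonpos] using hf _ (sub_mem_sub hk hy)
  exact nhds_basis_closedBall.mem_iff.1 (mem_interior_iff_mem_nhds.1 h0)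

theorem exists_mem_inter_dist_le {A B : Set E} (hA : Convex ℝ A) (hB : Convex ℝ B)
    (hAb : Bornology.IsBounded A) {r : ℝ} (hr : 0 < r) (hball : closedBall (0 : E) r ⊆ A - B)
    {x y : E} (hx : x ∈ A) (hy : y ∈ B) :
    ∃ w ∈ A ∩ B, dist w x ≤ diam A / r * dist x y := by
  rcases eq_or_ne x y with rfl | hxy
  · exact ⟨x, ⟨hx, hy⟩, by simp⟩
  set d := dist x y
  have hd : 0 < d := dist_pos.2 hxy
  obtain ⟨a, ha, b, hb, hab⟩ : (r / d) • (y - x) ∈ A - B := hball <| by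
    rw [mem_closedBall_zero_iff, norm_smul, Real.norm_of_nonneg (by positivity), ← dist_eq_norm',
      div_mul_cancel₀ _ hd.ne']
  -- the segments `[x, a] ⊆ A` and `[y, b] ⊆ B` meet at parameter `t`
  set t := d / (d + r)
  have ht0 : 0 ≤ t := by positivity
  have ht1 : 0 ≤ 1 - t := by
    rw [sub_nonneg, div_le_one (by positivity)]; linarith
  have hcoef : t * (r / d) = 1 - t := by
    simp only [t]; field_simp; ring
  have hmeet : (1 - t) • x + t • a = (1 - t) • y + t • b := by
    rw [eq_add_of_sub_eq' hab, smul_add, smul_smul, hcoef]; module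
  refine ⟨(1 - t) • x + t • a,
    ⟨hA hx ha ht1 ht0 (sub_add_cancel 1 t),
      hmeet ▸ hB hy hb ht1 ht0 (sub_add_cancel 1 t)⟩, ?_⟩
  calc dist ((1 - t) • x + t • a) x = t * dist a x := by
        rw [dist_eq_norm, dist_eq_norm, show (1 - t) • x + t • a - x = t • (a - x) by module,
          norm_smul, Real.norm_of_nonneg ht0]
    _ ≤ d / r * diam A := by
        gcongr
        · exact div_le_div_of_nonneg_left hd.le hr (by linarith)
        · exact dist_le_diam_of_mem hAb ha hx
    _ = diam A / r * d := by ring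

theorem exists_mem_inter_dist_le_of_mem_thickening {A B : Set E} (hA : Convex ℝ A)
    (hB : Convex ℝ B) (hAb : Bornology.IsBounded A) {r : ℝ} (hr : 0 < r)
    (hball : closedBall (0 : E) r ⊆ A - B) {ε : ℝ} {p : E} (hpA : p ∈ thickening ε A)
    (hpB : p ∈ thickening ε B) :
    ∃ w ∈ A ∩ B, dist p w ≤ (1 + 2 * diam A / r) * ε := by
  obtain ⟨x, hx, hpx⟩ := mem_thickening_iff.1 hpA
  obtain ⟨y, hy, hpy⟩ := mem_thickening_iff.1 hpB
  obtain ⟨w, hw, hwx⟩ := exists_mem_inter_dist_le hA hB hAb hr hball hx hy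
  have hxy : dist x y ≤ 2 * ε := by linarith [dist_triangle_left x y p]
  refine ⟨w, hw, ?_⟩
  calc dist p w ≤ dist p x + dist w x := dist_triangle_right p w x
    _ ≤ ε + diam A / r * (2 * ε) := by gcongr; exact hwx.trans (by gcongr)
    _ = (1 + 2 * diam A / r) * ε := by ring

theorem hausdorffDist_inter_le_of_subset_thickening {A B A' B' : Set E} (hA : Convex ℝ A)
    (hB : Convex ℝ B) (hA' : Convex ℝ A') (hB' : Convex ℝ B') (hAb : Bornology.IsBounded A)
    (hA'b : Bornology.IsBounded A') {r D ε : ℝ} (hr : 0 < r) (hε : 0 ≤ ε)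
    (hball : closedBall (0 : E) r ⊆ A - B) (hball' : closedBall (0 : E) r ⊆ A' - B')
    (hD : diam A ≤ D) (hD' : diam A' ≤ D)
    (hAA' : A ⊆ thickening ε A') (hA'A : A' ⊆ thickening ε A)
    (hBB' : B ⊆ thickening ε B') (hB'B : B' ⊆ thickening ε B) :
    hausdorffDist (A' ∩ B') (A ∩ B) ≤ (1 + 2 * D / r) * ε := by
  have hD0 : 0 ≤ D := diam_nonneg.trans hD
  refine hausdorffDist_le_of_mem_dist (by positivity) (fun p hp => ?_) (fun p hp => ?_)
  · obtain ⟨w, hw, hpw⟩ := exists_mem_inter_dist_le_of_mem_thickening hA hB hAb hr hball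
      (hA'A hp.1) (hB'B hp.2)
    exact ⟨w, hw, hpw.trans (by gcongr)⟩
  · obtain ⟨w, hw, hpw⟩ := exists_mem_inter_dist_le_of_mem_thickening hA' hB' hA'b hr hball'
      (hAA' hp.1) (hBB' hp.2)
    exact ⟨w, hw, hpw.trans (by gcongr)⟩

end NormedSpace

section InnerProductSpace

variable {F : Type*} [NormedAddCommGroup F] [InnerProductSpace ℝ F]

theorem exists_norm_eq_one_inner_lt_of_notMem {C : Set F} (hC : Convex ℝ C)
    (hCc : IsComplete C) (hne : C.Nonempty) {z : F} (hz : z ∉ C) :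
    ∃ u : F, ‖u‖ = 1 ∧ ∀ y ∈ C, ⟪u, y⟫ < ⟪u, z⟫ := by
  obtain ⟨p, hp, hmin⟩ := exists_norm_eq_iInf_of_complete_convex hne hCc hC z
  have hobtuse := (norm_eq_iInf_iff_real_inner_le_zero hC hp).1 hmin
  have hzp : z - p ≠ 0 := sub_ne_zero.2 (ne_of_mem_of_not_mem hp hz).symm
  refine ⟨‖z - p‖⁻¹ • (z - p), by simp [norm_smul, hzp], fun y hy => ?_⟩
  rw [real_inner_smul_left, real_inner_smul_left]
  refine mul_lt_mul_of_pos_left ?_ (by positivity)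
  have h1 := hobtuse y hy
  have h2 := real_inner_self_pos.2 hzp
  rw [inner_sub_right] at h1 h2
  linarith

theorem Convex.closedBall_subset_of_closedBall_subset_thickening {C : Set F} (hC : Convex ℝ C)
    (hCc : IsComplete C) {c : F} {ρ δ : ℝ} (hδ : 0 ≤ δ)
    (h : closedBall c ρ ⊆ Metric.thickening δ C) :
    closedBall c (ρ - δ) ⊆ C := by
  intro x hx
  by_contra hxC
  rw [mem_closedBall] at hx
  obtain ⟨y, hy, -⟩ :=
    mem_thickening_iff.1 (h (mem_closedBall_self (by linarith [dist_nonneg (x := x) (y := c)])))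
  obtain ⟨u, hu, hsep⟩ := exists_norm_eq_one_inner_lt_of_notMem hC hCc ⟨y, hy⟩ hxC
  -- moving from `x` by `δ` away from `C` stays in the ball but leaves the `δ`-thickening
  have hmem : x + δ • u ∈ closedBall c ρ := by
    rw [mem_closedBall, dist_eq_norm, add_sub_right_comm]
    calc ‖x - c + δ • u‖ ≤ ‖x - c‖ + ‖δ • u‖ := norm_add_le _ _
      _ ≤ ρ := by rw [norm_smul, hu, ← dist_eq_norm, Real.norm_of_nonneg hδ]; linarith
  obtain ⟨m, hm, hdist⟩ := mem_thickening_iff.1 (h hmem)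
  have : ⟪u, x + δ • u - m⟫ < δ := by
    calc ⟪u, x + δ • u - m⟫ ≤ ‖u‖ * ‖x + δ • u - m‖ := real_inner_le_norm _ _
      _ < δ := by rwa [hu, one_mul, ← dist_eq_norm]
  rw [inner_sub_right, inner_add_right, real_inner_smul_right, real_inner_self_eq_norm_sq, hu]
    at this
  linarith [hsep m hm]

theorem ConvexBody.coe_subset_thickening_of_dist_lt {K L : ConvexBody F} {ε : ℝ}
    (h : dist K L < ε) : (K : Set F) ⊆ thickening ε L := fun _ hx =>
  mem_thickening_iff.2 (exists_dist_lt_of_hausdorffDist_lt hx h ConvexBody.hausdorffEDist_ne_top)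

theorem ConvexBody.eventually_inter_nonempty_and_hausdorffDist_le {ι : Type*} {l : Filter ι}
    {K L : ConvexBody F} {Ki Li : ι → ConvexBody F} {ρ : ℝ} (hρ : 0 < ρ)
    (hball : closedBall (0 : F) ρ ⊆ (K : Set F) - L) (hK : Tendsto Ki l (nhds K))
    (hL : Tendsto Li l (nhds L)) {η : ℝ} (hη : 0 < η) :
    ∀ᶠ i in l, ((Ki i : Set F) ∩ Li i).Nonempty ∧
      hausdorffDist ((Ki i : Set F) ∩ Li i) ((K : Set F) ∩ L) ≤ η := by
  -- for `ε ≤ 1`, the diameters of `K` and `Ki i` are at most `D`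
  set D := diam (thickening 1 (K : Set F))
  set C := 1 + 2 * D / (ρ / 2)
  have hC : 0 < C := by positivity
  set ε := min (min 1 (ρ / 4)) (η / C)
  have hε : 0 < ε := by positivity
  have hε1 : ε ≤ 1 := (min_le_left _ _).trans (min_le_left _ _)
  have hερ : ε ≤ ρ / 4 := (min_le_left _ _).trans (min_le_right _ _)
  have hεη : C * ε ≤ η := by
    calc C * ε ≤ C * (η / C) := by gcongr; exact min_le_right _ _
      _ = η := mul_div_cancel₀ η hC.ne'
  filter_upwards [tendsto_nhds.1 hK ε hε, tendsto_nhds.1 hL ε hε] with i hKi hLi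
  have hKiK := ConvexBody.coe_subset_thickening_of_dist_lt hKi
  have hKKi := ConvexBody.coe_subset_thickening_of_dist_lt (dist_comm (Ki i) K ▸ hKi)
  have hLiL := ConvexBody.coe_subset_thickening_of_dist_lt hLi
  have hLLi := ConvexBody.coe_subset_thickening_of_dist_lt (dist_comm (Li i) L ▸ hLi)
  have hcompact : IsCompact ((Ki i : Set F) - (Li i : Set F)) := by
    rw [sub_eq_add_neg]; exact (Ki i).isCompact.add (Li i).isCompact.neg
  have hball' : closedBall (0 : F) (ρ / 2) ⊆ (Ki i : Set F) - (Li i : Set F) :=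
    (closedBall_subset_closedBall (by linarith)).trans <|
      ((Ki i).convex.sub (Li i).convex).closedBall_subset_of_closedBall_subset_thickening
        hcompact.isComplete (by positivity) (hball.trans (sub_subset_thickening_sub hKKi hLLi))
  have hzero : (0 : F) ∈ (Ki i : Set F) - (Li i : Set F) :=
    hball' (mem_closedBall_self (by positivity))
  refine ⟨not_disjoint_iff_nonempty_inter.1 (zero_mem_sub_iff.1 hzero), ?_⟩
  refine (hausdorffDist_inter_le_of_subset_thickening K.convex L.convex (Ki i).convex
    (Li i).convex K.isBounded (Ki i).isBounded (by positivity) hε.le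
    ((closedBall_subset_closedBall (by linarith)).trans hball) hball'
    (diam_mono (self_subset_thickening one_pos _) K.isBounded.thickening)
    (diam_mono (hKiK.trans (thickening_mono hε1 _)) K.isBounded.thickening)
    hKKi hKiK hLLi hLiL).trans hεη

end InnerProductSpace

/-- If convex bodies `K, L` in `ℝⁿ` cannot be separated by a hyperplane and
`Kᵢ → K`, `Lᵢ → L` in the Hausdorff metric, then `Kᵢ ∩ Lᵢ` is nonempty for all large `i`
and `Kᵢ ∩ Lᵢ → K ∩ L` in the Hausdorff metric. -/
theorem convergence_of_intersections {n : ℕ}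
    (K L : ConvexBody (EuclideanSpace ℝ (Fin n)))
    (hsep : ¬ ∃ (f : EuclideanSpace ℝ (Fin n) →ₗ[ℝ] ℝ) (α : ℝ), f ≠ 0 ∧
      (∀ x ∈ (K : Set (EuclideanSpace ℝ (Fin n))), f x ≤ α) ∧
      (∀ x ∈ (L : Set (EuclideanSpace ℝ (Fin n))), α ≤ f x))
    (Ki Li : ℕ → ConvexBody (EuclideanSpace ℝ (Fin n)))
    (hK : Tendsto Ki atTop (nhds K)) (hL : Tendsto Li atTop (nhds L)) :
    (∀ᶠ i in atTop, ((Ki i : Set (EuclideanSpace ℝ (Fin n))) ∩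
        (Li i : Set (EuclideanSpace ℝ (Fin n)))).Nonempty) ∧
    Tendsto (fun i => hausdorffDist
        ((Ki i : Set (EuclideanSpace ℝ (Fin n))) ∩ (Li i : Set (EuclideanSpace ℝ (Fin n))))
        ((K : Set (EuclideanSpace ℝ (Fin n))) ∩ (L : Set (EuclideanSpace ℝ (Fin n)))))
      atTop (nhds 0) := by
  obtain ⟨ρ, hρ, hball⟩ := exists_closedBall_subset_sub_of_not_separated K.convex L.convex
    K.isCompact K.nonempty L.nonempty hsep
  have key := fun η (hη : 0 < η) =>
    ConvexBody.eventually_inter_nonempty_and_hausdorffDist_le hρ hball hK hL hη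
  refine ⟨(key 1 one_pos).mono fun _ hi => hi.1,
    nhds_basis_closedBall.tendsto_right_iff.2 fun η hη => (key η hη).mono fun i hi => ?_⟩
  rw [mem_closedBall, Real.dist_eq, sub_zero, abs_of_nonneg hausdorffDist_nonneg]
  exact hi.2
end

section
/- Let P, P' be polytopes in a finite-dimensional real vector space V, let F be a face of P and F' a face of P'. If the relative interiors of F and F' intersect, then the conormal cone of P ∩ P' at the face F ∩ F' equals N(F,P) + N(F',P'), the Minkowski sum of the conormal cones of P at F and of P' at F'. -/
open Set Pointwise

variable {V : Type*} [NormedAddCommGroup V] [NormedSpace ℝ V]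

/-- A polytope is the convex hull of finitely many points. -/
def IsPolytope (P : Set V) : Prop :=
  ∃ s : Finset V, P = convexHull ℝ (s : Set V)

/-- `F` is a face of the polytope `P`. -/
def IsFaceOf (P F : Set V) : Prop :=
  F = P ∨ ∃ f : V →ₗ[ℝ] ℝ, f ≠ 0 ∧ ∃ α : ℝ,
    (∀ x ∈ P, f x ≤ α) ∧ F = P ∩ {x | f x = α}

/-- The conormal cone of `P` at the face `F`: all linear functionals attaining their maximum
over `P` at every point of `F` (i.e. `⟨ξ, v⟩ = h_P(ξ)` for all `v ∈ F`). -/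
def conormalCone (P F : Set V) : Set (Module.Dual ℝ V) :=
  {ξ | ∀ v ∈ F, ∀ x ∈ P, ξ x ≤ ξ v}

/-!
Pick `z` in both relative interiors. A functional `ξ` of the left-hand cone is maximized over
`P ∩ P'` at `z`, so it is nonpositive on the tangent cone of `P ∩ P'` at `z`, which (by convexity)
is the intersection of the tangent cones of `P` and `P'`. For polytopes these tangent cones are
finitely generated, hence closed, and Farkas' lemma splits `ξ = ξ₁ + ξ₂` with `ξ₁`, `ξ₂`
nonpositive on the tangent cones of `P`, resp. `P'`: that is, maximized over `P`, resp. `P'`,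
at `z`. A functional maximized at a relative interior point of a face is maximized on the
whole face.
-/

namespace PointedCone

lemma hull_image {E F : Type*} [AddCommGroup E] [Module ℝ E] [AddCommGroup F] [Module ℝ F]
    (f : E →ₗ[ℝ] F) (s : Set E) : hull ℝ (f '' s) = (hull ℝ s).map f :=
  Submodule.span_image (f.restrictScalars _)

lemma hull_union {E : Type*} [AddCommGroup E] [Module ℝ E] (s t : Set E) :
    hull ℝ (s ∪ t) = hull ℝ s ⊔ hull ℝ t :=
  Submodule.span_union s t

lemma mem_hull_finset {s : Finset V} {x : V} :
    x ∈ hull ℝ (s : Set V) ↔ ∃ f : V → ℝ, (∀ a ∈ s, 0 ≤ f a) ∧ ∑ a ∈ s, f a • a = x := by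
  classical
  rw [Submodule.mem_span_finset]
  constructor
  · rintro ⟨f, -, rfl⟩
    exact ⟨fun a => f a, fun a _ => (f a).2, rfl⟩
  · rintro ⟨f, hf, rfl⟩
    refine ⟨fun a => if h : a ∈ s then ⟨f a, hf a h⟩ else 0, fun a ha => ?_, ?_⟩
    · by_contra h
      exact ha (dif_neg h)
    · refine Finset.sum_congr rfl fun a ha => ?_
      simp [ha, Nonneg.mk_smul]

lemma coe_hull_finset (s : Finset V) :
    (hull ℝ (s : Set V) : Set V) =
      Fintype.linearCombination ℝ ((↑) : s → V) '' {c | 0 ≤ c} := by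
  ext x
  simp only [SetLike.mem_coe, Submodule.mem_span_finset', Fintype.linearCombination_apply,
    mem_image, mem_ofPred_eq]
  constructor
  · rintro ⟨f, rfl⟩
    exact ⟨fun a => f a, fun a => (f a).2, rfl⟩
  · rintro ⟨c, hc, rfl⟩
    exact ⟨fun a => ⟨c a, hc a⟩, by simp [Nonneg.mk_smul]⟩

lemma isClosed_hull_of_linearIndepOn {s : Finset V} (hs : LinearIndepOn ℝ id (s : Set V)) :
    IsClosed (hull ℝ (s : Set V) : Set V) := by
  rw [coe_hull_finset]
  refine (LinearMap.isClosedEmbedding_of_injective ?_).isClosedMap _ isClosed_Ici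
  exact LinearMap.ker_eq_bot.mpr hs.fintypeLinearCombination_injective

-- Carathéodory for cones: shift the coefficients along a linear dependence until one vanishes.
lemma mem_hull_erase_of_not_linearIndepOn [DecidableEq V] {s : Finset V} (hs : ¬LinearIndepOn ℝ id (s : Set V))
    {x : V} (hx : x ∈ hull ℝ (s : Set V)) : ∃ a ∈ s, x ∈ hull ℝ (s.erase a : Set V) := by
  obtain ⟨f, hf, rfl⟩ := mem_hull_finset.mp hx
  obtain ⟨g, hg, hgne⟩ := not_linearIndepOn_finset_iff.mp hs
  simp only [id] at hg
  wlog hgpos : ∃ a ∈ s, 0 < g a generalizing g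
  · obtain ⟨a, ha, hga⟩ := hgne
    refine this (-g) ⟨a, ha, by simpa using hga⟩ (by simp [hg]) ⟨a, ha, ?_⟩
    push Not at hgpos
    simpa using lt_of_le_of_ne (hgpos a ha) hga
  obtain ⟨a₀, ha₀, hmin⟩ := (s.filter (0 < g ·)).exists_min_image (fun a => f a / g a)
    (by simpa [Finset.filter_nonempty_iff] using hgpos)
  rw [Finset.mem_filter] at ha₀
  set t := f a₀ / g a₀
  refine ⟨a₀, ha₀.1, mem_hull_finset.mpr ⟨fun a => f a - t * g a, fun a ha => ?_, ?_⟩⟩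
  · have ha := Finset.mem_of_mem_erase ha
    rcases le_or_gt (g a) 0 with hga | hga
    · nlinarith [hf a ha, hf a₀ ha₀.1, div_nonneg (hf a₀ ha₀.1) ha₀.2.le]
    · have := hmin a (Finset.mem_filter.mpr ⟨ha, hga⟩)
      rw [le_div_iff₀ hga] at this
      linarith
  · have hzero : f a₀ - t * g a₀ = 0 := by simp [t, div_mul_cancel₀ _ ha₀.2.ne']
    rw [Finset.sum_erase _ (by simp only [hzero, zero_smul])]
    simp [sub_smul, mul_smul, Finset.sum_sub_distrib, ← Finset.smul_sum, hg]

lemma isClosed_hull_finset (s : Finset V) : IsClosed (hull ℝ (s : Set V) : Set V) := by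
  classical
  induction s using Finset.strongInduction with
  | H s ih =>
    by_cases hs : LinearIndepOn ℝ id (s : Set V)
    · exact isClosed_hull_of_linearIndepOn hs
    · have : (hull ℝ (s : Set V) : Set V) = ⋃ a ∈ s, hull ℝ (s.erase a : Set V) := by
        refine subset_antisymm (fun x hx => ?_) (iUnion₂_subset fun a _ => ?_)
        · simpa using mem_hull_erase_of_not_linearIndepOn hs hx
        · exact Submodule.span_mono (Finset.coe_subset.mpr (s.erase_subset a))
      rw [this]
      exact isClosed_biUnion_finset fun a ha => ih _ (Finset.erase_ssubset ha)

lemma isClosed_hull_of_finite {s : Set V} (hs : s.Finite) : IsClosed (hull ℝ s : Set V) := by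
  lift s to Finset V using hs
  exact isClosed_hull_finset s

lemma exists_add_eq_of_nonpos_on_hull_inf {s t : Set V} (hs : s.Finite) (ht : t.Finite)
    (ξ : Module.Dual ℝ V) (h : ∀ w ∈ hull ℝ s ⊓ hull ℝ t, ξ w ≤ 0) :
    ∃ ξ₁ ξ₂ : Module.Dual ℝ V, ξ₁ + ξ₂ = ξ ∧ (∀ a ∈ s, ξ₁ a ≤ 0) ∧ ∀ b ∈ t, ξ₂ b ≤ 0 := by
  -- Farkas in `V × ℝ`: `(0, 1)` would lie in the cone below exactly if some `w ∈ hull s ⊓ hull t`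
  -- had `ξ w = 1`, and a functional separating it yields `ξ₁` after division by its value there.
  set ι : V →ₗ[ℝ] V × ℝ := LinearMap.inl ℝ V ℝ
  set κ : V →ₗ[ℝ] V × ℝ := (-LinearMap.id).prod ξ
  have hD : ((0 : V), (1 : ℝ)) ∉ hull ℝ (ι '' s ∪ κ '' t) := by
    intro hmem
    rw [hull_union, hull_image, hull_image, Submodule.mem_sup] at hmem
    obtain ⟨_, ⟨w, hw, rfl⟩, _, ⟨w', hw', rfl⟩, hsum⟩ := hmem
    simp only [LinearMap.coe_restrictScalars, LinearMap.coe_inl, LinearMap.prod_apply,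
      LinearMap.coe_neg, LinearMap.id_coe, Function.prod_apply, Pi.neg_apply, id_eq,
      Prod.mk_add_mk, zero_add, Prod.mk.injEq, ι, κ] at hsum
    obtain ⟨hww', hξ⟩ := hsum
    rw [← sub_eq_add_neg, sub_eq_zero] at hww'
    subst hww'
    linarith [h w ⟨hw, hw'⟩]
  obtain ⟨f, hfD, hf⟩ := ProperCone.hyperplane_separation_point
    ⟨_, isClosed_hull_of_finite ((hs.image ι).union (ht.image κ))⟩ hD
  set c := f (0, 1)
  set η : Module.Dual ℝ V := f.toLinearMap ∘ₗ ι
  have hf_apply (v : V) (r : ℝ) : f (v, r) = η v + r * c := by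
    rw [← smul_eq_mul, ← map_smul]
    simp [η, ι, ← map_add]
  refine ⟨c⁻¹ • η, ξ - c⁻¹ • η, add_sub_cancel _ _, fun a ha => ?_, fun b hb => ?_⟩
  · have hfa : 0 ≤ η a := hfD _ (subset_hull (Or.inl (mem_image_of_mem ι ha)))
    exact mul_nonpos_of_nonpos_of_nonneg (inv_nonpos.mpr hf.le) hfa
  · have hfb : 0 ≤ f (-b, ξ b) := hfD _ (subset_hull (Or.inr (mem_image_of_mem κ hb)))
    rw [hf_apply, map_neg] at hfb
    have hξb : (ξ - c⁻¹ • η) b = c⁻¹ * (ξ b * c - η b) := by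
      rw [LinearMap.sub_apply, LinearMap.smul_apply, smul_eq_mul, mul_sub, mul_comm (ξ b),
        inv_mul_cancel_left₀ hf.ne]
    rw [hξb]
    exact mul_nonpos_of_nonpos_of_nonneg (inv_nonpos.mpr hf.le) (by linarith)

end PointedCone

open PointedCone

lemma Convex.exists_forall_add_smul_mem_of_mem_hull {P : Set V} (hP : Convex ℝ P) {z w : V}
    (hz : z ∈ P) (hw : w ∈ hull ℝ ((· - z) '' P)) :
    ∃ ε : ℝ, 0 < ε ∧ ∀ δ ∈ Icc 0 ε, z + δ • w ∈ P := by
  induction hw using Submodule.span_induction with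
  | mem _ hw =>
    obtain ⟨a, ha, rfl⟩ := hw
    exact ⟨1, one_pos, fun δ hδ => hP.add_smul_sub_mem hz ha hδ⟩
  | zero => exact ⟨1, one_pos, fun δ _ => by simpa using hz⟩
  | add w₁ w₂ _ _ h₁ h₂ =>
    obtain ⟨ε₁, hε₁, h₁⟩ := h₁
    obtain ⟨ε₂, hε₂, h₂⟩ := h₂
    refine ⟨min ε₁ ε₂ / 2, by positivity, fun δ ⟨hδ₀, hδ⟩ => ?_⟩
    have hmid := hP (h₁ (2 * δ) ⟨by linarith, by linarith [min_le_left ε₁ ε₂]⟩)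
      (h₂ (2 * δ) ⟨by linarith, by linarith [min_le_right ε₁ ε₂]⟩)
      (by norm_num : (0 : ℝ) ≤ 1 / 2) (by norm_num : (0 : ℝ) ≤ 1 / 2) (by norm_num)
    convert hmid using 1
    module
  | smul c w _ h =>
    obtain ⟨ε, hε, h⟩ := h
    rcases eq_or_lt_of_le c.2 with hc | hc
    · exact ⟨1, one_pos, fun δ _ => by simpa [← Nonneg.coe_smul, ← hc] using hz⟩
    · refine ⟨ε / c, div_pos hε hc, fun δ ⟨hδ₀, hδ⟩ => ?_⟩
      rw [← Nonneg.coe_smul, smul_smul]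
      exact h _ ⟨by positivity, (le_div_iff₀ hc).mp hδ⟩

lemma Convex.hull_sub_inf_le {P Q : Set V} (hP : Convex ℝ P) (hQ : Convex ℝ Q) {z : V}
    (hzP : z ∈ P) (hzQ : z ∈ Q) :
    hull ℝ ((· - z) '' P) ⊓ hull ℝ ((· - z) '' Q) ≤ hull ℝ ((· - z) '' (P ∩ Q)) := by
  rintro w ⟨hwP, hwQ⟩
  obtain ⟨ε, hε, hP⟩ := hP.exists_forall_add_smul_mem_of_mem_hull hzP hwP
  obtain ⟨ε', hε', hQ⟩ := hQ.exists_forall_add_smul_mem_of_mem_hull hzQ hwQ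
  set δ := min ε ε'
  have hδ : 0 < δ := lt_min hε hε'
  have hmem : z + δ • w ∈ P ∩ Q :=
    ⟨hP δ ⟨hδ.le, min_le_left _ _⟩, hQ δ ⟨hδ.le, min_le_right _ _⟩⟩
  have hw : w = δ⁻¹ • ((z + δ • w) - z) := by
    rw [add_sub_cancel_left, inv_smul_smul₀ hδ.ne']
  rw [hw]
  exact smul_mem _ (inv_nonneg.mpr hδ.le) (subset_hull (mem_image_of_mem _ hmem))

lemma IsMaxOn.nonpos_of_mem_hull_sub {P : Set V} {z w : V} {ξ : Module.Dual ℝ V}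
    (hmax : IsMaxOn ξ P z) (hw : w ∈ hull ℝ ((· - z) '' P)) : ξ w ≤ 0 := by
  have hle : hull ℝ ((· - z) '' P) ≤ (positive ℝ ℝ).comap (-ξ) := by
    refine Submodule.span_le.mpr (forall_mem_image.mpr fun x hx => ?_)
    simpa [mem_positive] using isMaxOn_iff.mp hmax x hx
  simpa [mem_positive] using hle hw

lemma isMaxOn_convexHull_of_forall_sub_nonpos {s : Set V} {z : V} {ξ : Module.Dual ℝ V}
    (h : ∀ a ∈ s, ξ (a - z) ≤ 0) : IsMaxOn ξ (convexHull ℝ s) z := by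
  refine isMaxOn_iff.mpr fun x hx => convexHull_min (fun a ha => ?_)
    (convex_halfSpace_le ξ.isLinear (ξ z)) hx
  simpa using h a ha

lemma exists_pos_add_smul_sub_mem_of_mem_intrinsicInterior {F : Set V} {z v : V}
    (hz : z ∈ intrinsicInterior ℝ F) (hv : v ∈ affineSpan ℝ F) :
    ∃ δ : ℝ, 0 < δ ∧ z + δ • (z - v) ∈ F := by
  obtain ⟨y, hy, rfl⟩ := hz
  let φ : ℝ → affineSpan ℝ F := fun δ =>
    ⟨y + δ • ((y : V) - v), by
      simpa [add_comm] using AffineSubspace.smul_vsub_vadd_mem _ δ y.2 hv y.2⟩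
  have hφ : Continuous φ := by fun_prop
  have hφ0 : φ 0 = y := by ext; simp [φ]
  have hev : ∀ᶠ δ in nhds 0, φ δ ∈ interior ((↑) ⁻¹' F) :=
    hφ.continuousAt.preimage_mem_nhds (hφ0 ▸ isOpen_interior.mem_nhds hy)
  obtain ⟨δ, hδF, hδ⟩ := ((hev.filter_mono nhdsWithin_le_nhds).and
    (self_mem_nhdsWithin (s := Ioi 0))).exists
  exact ⟨δ, hδ, interior_subset (s := ((↑) ⁻¹' F : Set (affineSpan ℝ F))) hδF⟩

lemma mem_conormalCone_of_isMaxOn {P F : Set V} {z : V} {ξ : Module.Dual ℝ V} (hFP : F ⊆ P)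
    (hz : z ∈ intrinsicInterior ℝ F) (hmax : IsMaxOn ξ P z) : ξ ∈ conormalCone P F := by
  intro v hv x hx
  obtain ⟨δ, hδ, hmem⟩ :=
    exists_pos_add_smul_sub_mem_of_mem_intrinsicInterior hz (subset_affineSpan ℝ F hv)
  have hpush : ξ z + δ * (ξ z - ξ v) ≤ ξ z := by
    simpa using isMaxOn_iff.mp hmax _ (hFP hmem)
  have hzv : ξ z ≤ ξ v := by nlinarith
  exact (isMaxOn_iff.mp hmax x hx).trans hzv

lemma conormalCone_add_subset_inter {P P' F F' : Set V} :
    conormalCone P F + conormalCone P' F' ⊆ conormalCone (P ∩ P') (F ∩ F') := by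
  rintro _ ⟨ξ, hξ, ξ', hξ', rfl⟩ v ⟨hv, hv'⟩ x ⟨hx, hx'⟩
  exact add_le_add (hξ v hv x hx) (hξ' v hv' x hx')

lemma IsFaceOf.subset {P F : Set V} (hF : IsFaceOf P F) : F ⊆ P := by
  rcases hF with rfl | ⟨_, _, _, _, rfl⟩
  exacts [subset_rfl, inter_subset_left]

theorem conormalCone_inter_general {P P' F F' : Set V}
    (hP : IsPolytope P) (hP' : IsPolytope P')
    (hF : IsFaceOf P F) (hF' : IsFaceOf P' F')
    (hri : (intrinsicInterior ℝ F ∩ intrinsicInterior ℝ F').Nonempty) :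
    conormalCone (P ∩ P') (F ∩ F') = conormalCone P F + conormalCone P' F' := by
  obtain ⟨z, hzF, hzF'⟩ := hri
  have hzP : z ∈ P := hF.subset (intrinsicInterior_subset hzF)
  have hzP' : z ∈ P' := hF'.subset (intrinsicInterior_subset hzF')
  refine subset_antisymm (fun ξ hξ => ?_) conormalCone_add_subset_inter
  have hmax : IsMaxOn ξ (P ∩ P') z :=
    isMaxOn_iff.mpr (hξ z ⟨intrinsicInterior_subset hzF, intrinsicInterior_subset hzF'⟩)
  obtain ⟨s, rfl⟩ := hP
  obtain ⟨s', rfl⟩ := hP'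
  have htangent : ∀ w ∈ hull ℝ ((· - z) '' s) ⊓ hull ℝ ((· - z) '' s'), ξ w ≤ 0 := by
    refine fun w hw => hmax.nonpos_of_mem_hull_sub <|
      (convex_convexHull ℝ _).hull_sub_inf_le (convex_convexHull ℝ _) hzP hzP' ?_
    exact inf_le_inf (Submodule.span_mono (image_mono (subset_convexHull ℝ _)))
      (Submodule.span_mono (image_mono (subset_convexHull ℝ _))) hw
  obtain ⟨ξ₁, ξ₂, rfl, h₁, h₂⟩ := exists_add_eq_of_nonpos_on_hull_inf
    (s.finite_toSet.image _) (s'.finite_toSet.image _) ξ htangent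
  exact add_mem_add
    (mem_conormalCone_of_isMaxOn hF.subset hzF
      (isMaxOn_convexHull_of_forall_sub_nonpos (forall_mem_image.mp h₁)))
    (mem_conormalCone_of_isMaxOn hF'.subset hzF'
      (isMaxOn_convexHull_of_forall_sub_nonpos (forall_mem_image.mp h₂)))

/-- If the relative interiors of the faces `F ⊆ P` and `F' ⊆ P'` meet, then
`N(F ∩ F', P ∩ P') = N(F, P) + N(F', P')`. -/
theorem conormalCone_inter [FiniteDimensional ℝ V] {P P' F F' : Set V}
    (hP : IsPolytope P) (hP' : IsPolytope P')
    (hF : IsFaceOf P F) (hF' : IsFaceOf P' F')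
    (hri : (intrinsicInterior ℝ F ∩ intrinsicInterior ℝ F').Nonempty) :
    conormalCone (P ∩ P') (F ∩ F') = conormalCone P F + conormalCone P' F' :=
  conormalCone_inter_general hP hP' hF hF' hri
end

section
/- Let f : V → W be a linear surjection of finite-dimensional real vector spaces and let X, X' be two linear complements of ker f in V. Then for all densities μ on ker f and ν on W, the product densities μ × ((f|_X)⁻¹)_*ν and μ × ((f|_{X'})⁻¹)_*ν on V = ker f ⊕ X = ker f ⊕ X' coincide. -/
/-!
Since `f ∘ g = f ∘ g'`, the difference `g' - g` takes values in `ker f`, so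
`x + g' w = (x + (g' - g) w) + g w`. The shear `(x, w) ↦ (x + (g' - g) w, w)` preserves `μ × ν`
because `μ` is translation invariant on every fibre, hence the two pushforwards agree.
-/

open MeasureTheory Measure

instance AddMemClass.measurableAdd₂ {S V : Type*} [Add V] [MeasurableSpace V]
    [MeasurableAdd₂ V] [SetLike S V] [AddMemClass S V] (K : S) : MeasurableAdd₂ K :=
  ⟨((measurable_subtype_coe.comp measurable_fst).add
    (measurable_subtype_coe.comp measurable_snd)).subtype_mk⟩

namespace MeasureTheory

theorem measurePreserving_add_comp_snd_prod {G α : Type*} [AddGroup G] [MeasurableSpace G]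
    [MeasurableAdd₂ G] [MeasurableSpace α] (μ : Measure G) [IsAddRightInvariant μ] [SFinite μ]
    (ν : Measure α) [SFinite ν] {k : α → G} (hk : Measurable k) :
    MeasurePreserving (fun p : G × α => (p.1 + k p.2, p.2)) (μ.prod ν) (μ.prod ν) := by
  have hskew : MeasurePreserving (fun p : α × G => (p.1, p.2 + k p.1)) (ν.prod μ) (ν.prod μ) :=
    (MeasurePreserving.id ν).skew_product (g := fun a x => x + k a)
      (measurable_snd.add (hk.comp measurable_fst))
      (Filter.Eventually.of_forall fun a => (measurePreserving_add_right μ (k a)).map_eq)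
  exact (measurePreserving_swap.comp hskew).comp measurePreserving_swap

theorem map_coe_add_prod_eq_of_sub_mem {S V α : Type*} [AddCommGroup V] [MeasurableSpace V]
    [MeasurableAdd₂ V] [MeasurableSub₂ V] [SetLike S V] [AddSubgroupClass S V] {K : S}
    [MeasurableSpace α] (μ : Measure K) [IsAddRightInvariant μ] [SFinite μ]
    (ν : Measure α) [SFinite ν] {g g' : α → V} (hg : Measurable g) (hg' : Measurable g')
    (hsub : ∀ a, g' a - g a ∈ K) :
    map (fun p : K × α => (p.1 : V) + g p.2) (μ.prod ν) =
      map (fun p : K × α => (p.1 : V) + g' p.2) (μ.prod ν) := by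
  set k : α → K := fun a => ⟨g' a - g a, hsub a⟩
  have hk : Measurable k := (hg'.sub hg).subtype_mk
  have hφ : Measurable fun p : K × α => (p.1 : V) + g p.2 :=
    (measurable_subtype_coe.comp measurable_fst).add (hg.comp measurable_snd)
  have hshear := measurePreserving_add_comp_snd_prod μ ν hk
  nth_rewrite 1 [← hshear.map_eq]
  rw [map_map hφ hshear.measurable]
  congr 1
  funext p
  simp [k, add_assoc]

end MeasureTheory

theorem product_density_independent_of_complement_general
    {V W : Type*}
    [NormedAddCommGroup V] [NormedSpace ℝ V] [FiniteDimensional ℝ V]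
    [MeasurableSpace V] [BorelSpace V]
    [NormedAddCommGroup W] [NormedSpace ℝ W] [FiniteDimensional ℝ W]
    [MeasurableSpace W] [BorelSpace W]
    (f : V →ₗ[ℝ] W)
    (g g' : W →ₗ[ℝ] V)
    (hg : f.comp g = LinearMap.id)
    (hg' : f.comp g' = LinearMap.id)
    (μ : Measure (LinearMap.ker f)) (ν : Measure W)
    [μ.IsAddHaarMeasure] [SFinite ν] :
    Measure.map (fun p : (LinearMap.ker f) × W => (p.1 : V) + g p.2) (μ.prod ν) =
    Measure.map (fun p : (LinearMap.ker f) × W => (p.1 : V) + g' p.2) (μ.prod ν) := by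
  refine map_coe_add_prod_eq_of_sub_mem μ ν g.continuous_of_finiteDimensional.measurable
    g'.continuous_of_finiteDimensional.measurable fun w => ?_
  rw [LinearMap.mem_ker, map_sub, ← LinearMap.comp_apply, ← LinearMap.comp_apply, hg, hg',
    sub_self]

/-- For a linear surjection `f : V → W` and two complements `X, X'` of
`ker f`, the product densities `μ × ((f|_X)⁻¹)_* ν` and `μ × ((f|_{X'})⁻¹)_* ν` on `V`
coincide, for all densities `μ` on `ker f` and `ν` on `W`.  The product density is realized
as the pushforward of `μ.prod ν` under `(x, w) ↦ x + g w`, where `g : W → V` is the linear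
section of `f` with range `X`. -/
theorem product_density_independent_of_complement
    {V W : Type*}
    [NormedAddCommGroup V] [NormedSpace ℝ V] [FiniteDimensional ℝ V]
    [MeasurableSpace V] [BorelSpace V]
    [NormedAddCommGroup W] [NormedSpace ℝ W] [FiniteDimensional ℝ W]
    [MeasurableSpace W] [BorelSpace W]
    (f : V →ₗ[ℝ] W) (hf : Function.Surjective f)
    (X X' : Submodule ℝ V)
    (hX : IsCompl (LinearMap.ker f) X) (hX' : IsCompl (LinearMap.ker f) X')
    (g g' : W →ₗ[ℝ] V)
    (hg : f.comp g = LinearMap.id) (hgr : LinearMap.range g = X)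
    (hg' : f.comp g' = LinearMap.id) (hgr' : LinearMap.range g' = X')
    (μ : Measure (LinearMap.ker f)) (ν : Measure W)
    [μ.IsAddHaarMeasure] [ν.IsAddHaarMeasure] [SFinite μ] [SFinite ν] :
    Measure.map (fun p : (LinearMap.ker f) × W => (p.1 : V) + g p.2) (μ.prod ν) =
    Measure.map (fun p : (LinearMap.ker f) × W => (p.1 : V) + g' p.2) (μ.prod ν) :=
  product_density_independent_of_complement_general f g g' hg hg' μ ν
end

section
/- Given m ≥ 3 points in the real projective plane, not all lying on a common line, there exists a line containing exactly two of the points. -/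
/-!
Kelly's proof of the Sylvester–Gallai theorem, transported to the projective plane through an
affine chart. Choose a linear form `φ` vanishing at none of the points; normalising each point to
its representative on the plane `φ = 1` turns projective lines into affine lines. Among all pairs
of a point `p` and a line `ab` through two other points with `p ∉ ab`, take one minimising the
distance from `p` to `ab`, and let `f` be the foot of the perpendicular. If `ab` carried a third
point, two of the three, say `x` and `y`, would lie on the same side of `f` with `x` between `f`
and `y`; then `x` is closer to the line `py` than `f` is, and `f` is closer to it than `p` is to
`ab`, contradicting minimality.
-/

open AffineMap RealInnerProductSpace
open scoped LinearAlgebra.Projectivization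

section Affine

variable {k V P V' P' : Type*} [DivisionRing k] [AddCommGroup V] [Module k V] [AddTorsor V P]
  [AddCommGroup V'] [Module k V'] [AddTorsor V' P']

theorem collinear_of_forall_mem_affineSpan_pair {s : Set P} {a b : P}
    (h : ∀ p ∈ s, p ∈ line[k, a, b]) : Collinear k s := by
  refine (collinear_iff_exists_forall_eq_smul_vadd _).2 ⟨a, b -ᵥ a, fun p hp => ?_⟩
  obtain ⟨r, rfl⟩ := mem_affineSpan_pair_iff_exists_lineMap_eq.1 (h p hp)
  exact ⟨r, lineMap_apply a b r⟩

theorem exists_notMem_affineSpan_pair_of_not_collinear {s : Set P} (h : ¬Collinear k s) :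
    ∃ p ∈ s, ∃ a ∈ s, ∃ b ∈ s, a ≠ b ∧ p ∉ line[k, a, b] := by
  by_contra! H
  rcases s.subsingleton_or_nontrivial with hs | ⟨a, ha, b, hb, hab⟩
  · rcases hs.eq_empty_or_singleton with rfl | ⟨a, rfl⟩
    exacts [h (collinear_empty k P), h (collinear_singleton k a)]
  · exact h (collinear_of_forall_mem_affineSpan_pair fun p hp => H p hp a ha b hb hab)

theorem notMem_affineSpan_pair_of_notMem {s : AffineSubspace k P} {p x y : P} (hp : p ∉ s)
    (hx : x ∈ s) (hy : y ∈ s) (hxy : x ≠ y) : x ∉ line[k, p, y] := fun hxl =>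
  hp <| affineSpan_pair_le_of_mem_of_mem hx hy <|
    (collinear_insert_of_mem_affineSpan_pair hxl).mem_affineSpan_of_mem_of_ne
      (by simp) (by simp) (by simp) hxy

theorem Collinear.image {s : Set P} (h : Collinear k s) (f : P →ᵃ[k] P') :
    Collinear k (f '' s) := by
  obtain ⟨p₀, v, hv⟩ := (collinear_iff_exists_forall_eq_smul_vadd s).1 h
  refine (collinear_iff_exists_forall_eq_smul_vadd _).2 ⟨f p₀, f.linear v, ?_⟩
  rintro _ ⟨p, hp, rfl⟩
  obtain ⟨r, rfl⟩ := hv p hp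
  exact ⟨r, by rw [f.map_vadd, f.linear.map_smul]⟩

theorem AffineMap.apply_mem_affineSpan_pair (f : P →ᵃ[k] P') {r a b : P}
    (h : r ∈ line[k, a, b]) : f r ∈ line[k, f a, f b] := by
  obtain ⟨t, rfl⟩ := mem_affineSpan_pair_iff_exists_lineMap_eq.1 h
  rw [f.apply_lineMap]
  exact lineMap_mem_affineSpan_pair t _ _

end Affine

section OrderedField

variable {R V P : Type*} [Field R] [LinearOrder R] [IsStrictOrderedRing R] [AddCommGroup V]
  [Module R V] [AddTorsor V P]

theorem wbtw_or_wbtw_of_mul_sub_nonneg {u a b : R} (h : 0 ≤ (a - u) * (b - u)) :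
    Wbtw R u a b ∨ Wbtw R u b a := by
  rcases mul_nonneg_iff.1 h with ⟨ha, hb⟩ | ⟨ha, hb⟩ <;> rcases le_total a b with hab | hba
  · exact .inl (.of_le_of_le (by linarith) hab)
  · exact .inr (.of_le_of_le (by linarith) hba)
  · exact .inr (Wbtw.of_le_of_le hab (by linarith)).symm
  · exact .inl (Wbtw.of_le_of_le hba (by linarith)).symm

theorem exists_wbtw_of_ne_of_ne_of_ne {u x y z : R} (hxy : x ≠ y) (hxz : x ≠ z) (hyz : y ≠ z) :
    ∃ a ∈ ({x, y, z} : Set R), ∃ b ∈ ({x, y, z} : Set R), a ≠ b ∧ Wbtw R u a b := by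
  have : 0 ≤ (x - u) * (y - u) ∨ 0 ≤ (x - u) * (z - u) ∨ 0 ≤ (y - u) * (z - u) := by
    by_contra! h
    -- `(x - u) (y - u) · (x - u) (z - u) = (x - u)² · (y - u) (z - u)`
    nlinarith [mul_pos_of_neg_of_neg h.1 h.2.1, sq_nonneg (x - u)]
  rcases this with h | h | h <;> rcases wbtw_or_wbtw_of_mul_sub_nonneg h with h' | h'
  all_goals first
    | exact ⟨_, by simp, _, by simp, by assumption, h'⟩
    | exact ⟨_, by simp, _, by simp, Ne.symm (by assumption), h'⟩

theorem exists_wbtw_of_mem_affineSpan_pair {a b r f : P} (hab : a ≠ b) (hr : r ∈ line[R, a, b])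
    (hf : f ∈ line[R, a, b]) (hra : r ≠ a) (hrb : r ≠ b) :
    ∃ x ∈ ({a, b, r} : Set P), ∃ y ∈ ({a, b, r} : Set P), x ≠ y ∧ Wbtw R f x y := by
  obtain ⟨t, rfl⟩ := mem_affineSpan_pair_iff_exists_lineMap_eq.1 hr
  obtain ⟨u, rfl⟩ := mem_affineSpan_pair_iff_exists_lineMap_eq.1 hf
  have ht0 : (0 : R) ≠ t := by rintro rfl; simp at hra
  have ht1 : (1 : R) ≠ t := by rintro rfl; simp at hrb
  obtain ⟨x, hx, y, hy, hxy, hw⟩ := exists_wbtw_of_ne_of_ne_of_ne (u := u) zero_ne_one ht0 ht1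
  refine ⟨lineMap a b x, ?_, lineMap a b y, ?_, (lineMap_injective R hab).ne hxy, hw.map _⟩
  · rcases hx with rfl | rfl | rfl <;> simp
  · rcases hy with rfl | rfl | rfl <;> simp

end OrderedField

section Normed

variable {V P : Type*} [NormedAddCommGroup V] [NormedSpace ℝ V] [MetricSpace P]
  [NormedAddTorsor V P]

theorem infDist_le_infDist_of_wbtw {s : AffineSubspace ℝ P} {y x f : P} (hy : y ∈ s)
    (h : Wbtw ℝ y x f) : Metric.infDist x s ≤ Metric.infDist f s := by
  obtain ⟨t, ⟨ht0, ht1⟩, rfl⟩ := h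
  refine (Metric.le_infDist ⟨y, hy⟩).2 fun z hz => ?_
  calc Metric.infDist (lineMap y f t) s ≤ dist (lineMap y f t) (lineMap y z t) :=
        Metric.infDist_le_dist_of_mem (AffineMap.lineMap_mem t hy hz)
    _ = t * dist f z := by
        rw [dist_eq_norm_vsub V, lineMap_vsub_lineMap, vsub_self]
        simp only [lineMap_apply_module, smul_zero, zero_add, norm_smul, Real.norm_eq_abs,
          abs_of_nonneg ht0, dist_eq_norm_vsub V]
    _ ≤ dist f z := mul_le_of_le_one_left dist_nonneg ht1

end Normed

namespace EuclideanGeometry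

variable {V P : Type*} [NormedAddCommGroup V] [InnerProductSpace ℝ V] [MetricSpace P]
  [NormedAddTorsor V P]

theorem infDist_affineSpan_pair_lt_dist {p f y : P} (hp : p ≠ f)
    (h : ⟪p -ᵥ f, y -ᵥ f⟫ = 0) : Metric.infDist f line[ℝ, p, y] < dist p f := by
  set z := orthogonalProjection line[ℝ, p, y] f
  have hzp : (z : P) ≠ p := by
    intro hzp
    have horth : ⟪y -ᵥ p, f -ᵥ p⟫ = 0 := by
      have := vsub_orthogonalProjection_mem_direction_orthogonal line[ℝ, p, y] f
      rw [hzp] at this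
      exact Submodule.inner_right_of_mem_orthogonal
        (AffineSubspace.vsub_mem_direction (right_mem_affineSpan_pair ℝ p y)
          (left_mem_affineSpan_pair ℝ p y)) this
    have : ⟪y -ᵥ p, f -ᵥ p⟫ = ‖f -ᵥ p‖ ^ 2 := by
      rw [← vsub_add_vsub_cancel y f p, inner_add_left, real_inner_self_eq_norm_sq,
        ← neg_vsub_eq_vsub_rev p f, inner_neg_right, real_inner_comm, h, neg_zero, zero_add]
    rw [horth, eq_comm, sq_eq_zero_iff, norm_eq_zero, vsub_eq_zero_iff_eq] at this
    exact hp this.symm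
  have hpyth := dist_sq_eq_dist_orthogonalProjection_sq_add_dist_orthogonalProjection_sq f
    (left_mem_affineSpan_pair ℝ p y)
  rw [← dist_orthogonalProjection_eq_infDist, ← sq_lt_sq₀ dist_nonneg dist_nonneg]
  have : 0 < dist p z := dist_pos.2 (Ne.symm hzp)
  nlinarith

theorem exists_ordinary_line_of_not_collinear (T : Finset P) (hT : ¬Collinear ℝ (T : Set P)) :
    ∃ a ∈ T, ∃ b ∈ T, a ≠ b ∧ ∀ r ∈ T, r ∈ line[ℝ, a, b] → r = a ∨ r = b := by
  classical
  let S := (T ×ˢ T ×ˢ T).filter fun q : P × P × P => q.2.1 ≠ q.2.2 ∧ q.1 ∉ line[ℝ, q.2.1, q.2.2]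
  have hS : S.Nonempty := by
    obtain ⟨p, hp, a, ha, b, hb, hab, hpl⟩ := exists_notMem_affineSpan_pair_of_not_collinear hT
    exact ⟨(p, a, b), by simp_all [S]⟩
  obtain ⟨⟨p, a, b⟩, hpab, hmin⟩ :=
    S.exists_min_image (fun q => Metric.infDist q.1 line[ℝ, q.2.1, q.2.2]) hS
  simp only [S, Finset.mem_filter, Finset.mem_product] at hpab hmin
  obtain ⟨⟨hp, ha, hb⟩, hab, hpl⟩ := hpab
  refine ⟨a, ha, b, hb, hab, fun r hr hrl => ?_⟩
  by_contra! hr'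
  set f : P := ↑(orthogonalProjection line[ℝ, a, b] p)
  obtain ⟨x, hx, y, hy, hxy, hwbtw⟩ :=
    exists_wbtw_of_mem_affineSpan_pair hab hrl (orthogonalProjection_mem p) hr'.1 hr'.2
  have hmem : ∀ z ∈ ({a, b, r} : Set P), z ∈ T ∧ z ∈ line[ℝ, a, b] := by
    rintro z (rfl | rfl | rfl)
    exacts [⟨ha, left_mem_affineSpan_pair ℝ _ _⟩, ⟨hb, right_mem_affineSpan_pair ℝ _ _⟩, ⟨hr, hrl⟩]
  obtain ⟨hxT, hxl⟩ := hmem x hx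
  obtain ⟨hyT, hyl⟩ := hmem y hy
  have hpy : p ≠ y := fun h => hpl (h ▸ hyl)
  have hxpy : x ∉ line[ℝ, p, y] := notMem_affineSpan_pair_of_notMem hpl hxl hyl hxy
  have hpf : p ≠ f := fun h => hpl (h ▸ orthogonalProjection_mem p)
  have horth : ⟪p -ᵥ f, y -ᵥ f⟫ = 0 :=
    Submodule.inner_left_of_mem_orthogonal
      (AffineSubspace.vsub_mem_direction hyl (orthogonalProjection_mem p))
      (vsub_orthogonalProjection_mem_direction_orthogonal _ p)
  refine lt_irrefl (Metric.infDist x line[ℝ, p, y]) ?_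
  calc Metric.infDist x line[ℝ, p, y]
      ≤ Metric.infDist f line[ℝ, p, y] :=
        infDist_le_infDist_of_wbtw (right_mem_affineSpan_pair ℝ p y) hwbtw.symm
    _ < dist p f := infDist_affineSpan_pair_lt_dist hpf horth
    _ = Metric.infDist p line[ℝ, a, b] := dist_orthogonalProjection_eq_infDist _ p
    _ ≤ Metric.infDist x line[ℝ, p, y] := hmin (x, p, y) ⟨⟨hxT, hp, hyT⟩, hpy, hxpy⟩

end EuclideanGeometry

theorem exists_ordinary_line_of_not_collinear {V : Type*} [AddCommGroup V] [Module ℝ V]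
    [FiniteDimensional ℝ V] (T : Finset V) (hT : ¬Collinear ℝ (T : Set V)) :
    ∃ a ∈ T, ∃ b ∈ T, a ≠ b ∧ ∀ r ∈ T, r ∈ line[ℝ, a, b] → r = a ∨ r = b := by
  classical
  let E := EuclideanSpace ℝ (Fin (Module.finrank ℝ V))
  let e : V ≃ₗ[ℝ] E := LinearEquiv.ofFinrankEq V E finrank_euclideanSpace_fin.symm
  have hT' : ¬Collinear ℝ (↑(T.image e) : Set E) := by
    refine fun h => hT ?_
    have := h.image e.symm.toLinearMap.toAffineMap
    simpa only [Finset.coe_image, Set.image_image, LinearMap.coe_toAffineMap,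
      LinearEquiv.coe_coe, LinearEquiv.symm_apply_apply, Set.image_id'] using this
  obtain ⟨_, ha', _, hb', hab, hline⟩ :=
    EuclideanGeometry.exists_ordinary_line_of_not_collinear _ hT'
  obtain ⟨a, ha, rfl⟩ := Finset.mem_image.1 ha'
  obtain ⟨b, hb, rfl⟩ := Finset.mem_image.1 hb'
  refine ⟨a, ha, b, hb, ne_of_apply_ne e hab, fun r hr hrl => ?_⟩
  simpa using hline (e r) (Finset.mem_image_of_mem e hr)
    (e.toLinearMap.toAffineMap.apply_mem_affineSpan_pair hrl)

section Dual

variable {K V : Type*} [Field K] [AddCommGroup V] [Module K V] {φ : Module.Dual K V} {x y z : V}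

theorem linearIndependent_pair_of_apply_eq_one (hx : φ x = 1) (hy : φ y = 1) (hxy : x ≠ y) :
    LinearIndependent K ![x, y] := by
  refine LinearIndependent.pair_iff.2 fun s t hst => ?_
  have hts : t = -s := by
    have := congrArg φ hst
    simp only [map_add, map_smul, hx, hy, smul_eq_mul, mul_one, map_zero] at this
    linear_combination this
  subst hts
  have : s • (x - y) = 0 := by rw [smul_sub, sub_eq_add_neg, ← neg_smul]; exact hst
  simpa [sub_eq_zero, hxy] using this

theorem finrank_span_pair_of_apply_eq_one (hx : φ x = 1) (hy : φ y = 1) (hxy : x ≠ y) :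
    Module.finrank K (Submodule.span K {x, y}) = 2 := by
  rw [← Matrix.range_cons_cons_empty x y ![], finrank_span_eq_card
    (linearIndependent_pair_of_apply_eq_one hx hy hxy), Fintype.card_fin]

theorem mem_span_pair_iff_mem_affineSpan_pair (hx : φ x = 1) (hy : φ y = 1) (hz : φ z = 1) :
    z ∈ Submodule.span K {x, y} ↔ z ∈ line[K, x, y] := by
  rw [Submodule.mem_span_pair, mem_affineSpan_pair_iff_exists_lineMap_eq]
  constructor
  · rintro ⟨a, b, rfl⟩
    have hab : a + b = 1 := by simpa [hx, hy] using hz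
    exact ⟨b, by rw [lineMap_apply_module, ← hab]; module⟩
  · rintro ⟨t, rfl⟩
    exact ⟨1 - t, t, by rw [lineMap_apply_module]⟩

end Dual

namespace Projectivization

variable {K V : Type*} [Field K] [AddCommGroup V] [Module K V]

/-- The representative of `p` in the affine hyperplane `φ = 1` (junk `0` when `φ p.rep = 0`). -/
noncomputable def affineRep (φ : Module.Dual K V) (p : ℙ K V) : V := (φ p.rep)⁻¹ • p.rep

variable {φ : Module.Dual K V} {p q r : ℙ K V}

theorem apply_affineRep (hp : φ p.rep ≠ 0) : φ (p.affineRep φ) = 1 := by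
  simp only [affineRep, map_smul, smul_eq_mul, inv_mul_cancel₀ hp]

theorem submodule_eq_span_affineRep (hp : φ p.rep ≠ 0) : p.submodule = K ∙ p.affineRep φ := by
  rw [submodule_eq, affineRep, Submodule.span_singleton_smul_eq (inv_ne_zero hp).isUnit]

theorem exists_dual_forall_rep_ne_zero [Infinite K] (s : Finset (ℙ K V)) :
    ∃ φ : Module.Dual K V, ∀ p ∈ s, φ p.rep ≠ 0 := by
  obtain ⟨φ, hφ⟩ := Module.exists_dual_forall_apply_ne_zero (K := K)
    (fun p : s => (p : ℙ K V).rep) fun p => p.1.rep_nonzero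
  exact ⟨φ, fun p hp => hφ ⟨p, hp⟩⟩

theorem injOn_affineRep (φ : Module.Dual K V) :
    Set.InjOn (affineRep φ) {p : ℙ K V | φ p.rep ≠ 0} := fun p hp q hq h =>
  submodule_injective <| by
    rw [submodule_eq_span_affineRep hp, submodule_eq_span_affineRep hq, h]

theorem finrank_span_affineRep_pair (hp : φ p.rep ≠ 0) (hq : φ q.rep ≠ 0) (hpq : p ≠ q) :
    Module.finrank K (Submodule.span K {p.affineRep φ, q.affineRep φ}) = 2 :=
  finrank_span_pair_of_apply_eq_one (apply_affineRep hp) (apply_affineRep hq)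
    ((injOn_affineRep φ).ne hp hq hpq)

theorem submodule_le_span_affineRep_iff (hp : φ p.rep ≠ 0) (hq : φ q.rep ≠ 0)
    (hr : φ r.rep ≠ 0) :
    r.submodule ≤ Submodule.span K {p.affineRep φ, q.affineRep φ} ↔
      r.affineRep φ ∈ line[K, p.affineRep φ, q.affineRep φ] := by
  rw [submodule_eq_span_affineRep hr, Submodule.span_singleton_le_iff_mem,
    mem_span_pair_iff_mem_affineSpan_pair (apply_affineRep hp) (apply_affineRep hq)
      (apply_affineRep hr)]

end Projectivization

/-- **Motzkin.** Given at least three points in the real projective plane,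
not all on a common line, there is a line containing exactly two of the points. -/
theorem motzkin_two_point_line
    (s : Finset (Projectivization ℝ (Fin 3 → ℝ)))
    (hcard : 3 ≤ s.card)
    (hnc : ¬ ∃ W : Submodule ℝ (Fin 3 → ℝ), Module.finrank ℝ W = 2 ∧
      ∀ p ∈ s, Projectivization.submodule p ≤ W) :
    ∃ W : Submodule ℝ (Fin 3 → ℝ), Module.finrank ℝ W = 2 ∧
      ∃ p ∈ s, ∃ q ∈ s, p ≠ q ∧
        Projectivization.submodule p ≤ W ∧ Projectivization.submodule q ≤ W ∧
        ∀ r ∈ s, Projectivization.submodule r ≤ W → r = p ∨ r = q := by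
  classical
  obtain ⟨φ, hφ⟩ := Projectivization.exists_dual_forall_rep_ne_zero s
  let g := Projectivization.affineRep φ
  have hinj : Set.InjOn g s := (Projectivization.injOn_affineRep φ).mono hφ
  have hline : ∀ {p q r}, p ∈ s → q ∈ s → r ∈ s →
      (r.submodule ≤ Submodule.span ℝ {g p, g q} ↔ g r ∈ line[ℝ, g p, g q]) :=
    fun hp hq hr =>
      Projectivization.submodule_le_span_affineRep_iff (hφ _ hp) (hφ _ hq) (hφ _ hr)
  have hrank : ∀ {p q}, p ∈ s → q ∈ s → p ≠ q →
      Module.finrank ℝ (Submodule.span ℝ {g p, g q}) = 2 :=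
    fun hp hq => Projectivization.finrank_span_affineRep_pair (hφ _ hp) (hφ _ hq)
  have hT : ¬Collinear ℝ (g '' s) := by
    intro hcol
    obtain ⟨p, hp, q, hq, hpq⟩ := Finset.one_lt_card.1 (by omega : 1 < s.card)
    exact hnc ⟨_, hrank hp hq hpq, fun r hr => (hline hp hq hr).2 <|
      hcol.mem_affineSpan_of_mem_of_ne (Set.mem_image_of_mem g hp) (Set.mem_image_of_mem g hq)
        (Set.mem_image_of_mem g hr) (hinj.ne hp hq hpq)⟩
  obtain ⟨_, ha, _, hb, hab, hord⟩ :=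
    exists_ordinary_line_of_not_collinear (s.image g) (by rwa [Finset.coe_image])
  obtain ⟨p, hp, rfl⟩ := Finset.mem_image.1 ha
  obtain ⟨q, hq, rfl⟩ := Finset.mem_image.1 hb
  have hpq : p ≠ q := ne_of_apply_ne g hab
  refine ⟨_, hrank hp hq hpq, p, hp, q, hq, hpq,
    (hline hp hq hp).2 (left_mem_affineSpan_pair ℝ _ _),
    (hline hp hq hq).2 (right_mem_affineSpan_pair ℝ _ _), fun r hr hrW => ?_⟩
  rcases hord (g r) (Finset.mem_image_of_mem g hr) ((hline hp hq hr).1 hrW) with h | h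
  exacts [.inl (hinj hr hp h), .inr (hinj hr hq h)]
end
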